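/- Let ε > 0, η = 2√π, 𝒜 = exp(-εη/2), and let f : ℝ → ℝ be a smooth 2π-periodic function. Let M_h be the multiplication operator (M_hψ)(x) = f(ηx/2)·ψ(x). Define (L₁ψ)(x) = 𝒜·(1 + ε(x+η))·ψ(x+η) - ψ(x) and (L₁†ψ)(x) = 𝒜·(1 + εx)·ψ(x-η) - ψ(x). Then for every smooth ψ : ℝ → ℂ and every x ∈ ℝ: ½·(L₁†([M_h, L₁]ψ))(x) + ½·(([L₁†, M_h])(L₁ψ))(x) = 0, i.e. 𝒟*[L₁](M_h) = 0. -/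
import Mathlib


open Complex

/-- The rotation `L₁ = 𝒜 e^{iηp}(1+εq) - 1` of `L₀` by angle `π/2` in phase space,
with `e^{iηp}` acting as translation by `η`. -/
noncomputable def L1 (ε η : ℝ) : (ℝ → ℂ) → (ℝ → ℂ) := fun ψ x =>
  (Real.exp (-(ε * η / 2)) : ℂ) * ((1 : ℂ) + ε * (x + η)) * ψ (x + η) - ψ x

/-- Formal adjoint `L₁†` of `L₁`. -/
noncomputable def L1d (ε η : ℝ) : (ℝ → ℂ) → (ℝ → ℂ) := fun ψ x =>
  (Real.exp (-(ε * η / 2)) : ℂ) * ((1 : ℂ) + ε * x) * ψ (x - η) - ψ x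

/-- Multiplication operator by `f(ηx/2)`. -/
noncomputable def Mh (η : ℝ) (f : ℝ → ℝ) : (ℝ → ℂ) → (ℝ → ℂ) := fun ψ x =>
  (f (η * x / 2) : ℂ) * ψ x

/-- Commutator of two operators on functions. -/
noncomputable def opComm (A B : (ℝ → ℂ) → (ℝ → ℂ)) : (ℝ → ℂ) → (ℝ → ℂ) :=
  fun ψ => A (B ψ) - B (A ψ)

theorem dissipator_L1_vanishes (ε : ℝ) (hε : 0 < ε) (η : ℝ)
    (hη : η = 2 * Real.sqrt Real.pi)
    (f : ℝ → ℝ) (hf : ContDiff ℝ (⊤ : ℕ∞) f) (hper : Function.Periodic f (2 * Real.pi))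
    (ψ : ℝ → ℂ) (hψ : ContDiff ℝ (⊤ : ℕ∞) ψ) (x : ℝ) :
    (1 / 2 : ℂ) * L1d ε η (opComm (Mh η f) (L1 ε η) ψ) x +
      (1 / 2 : ℂ) * opComm (L1d ε η) (Mh η f) (L1 ε η ψ) x = 0 := by
  have hπ : (0:ℝ) ≤ Real.pi := Real.pi_pos.le
  have hη2 : η * η = 4 * Real.pi := by
    rw [hη]; rw [show 2 * Real.sqrt Real.pi * (2 * Real.sqrt Real.pi) = 4 * (Real.sqrt Real.pi * Real.sqrt Real.pi) by ring, Real.mul_self_sqrt hπ]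
  have key : ∀ y : ℝ, f (η * (y + η) / 2) = f (η * y / 2) := by
    intro y
    have : η * (y + η) / 2 = η * y / 2 + 2 * Real.pi := by
      field_simp; nlinarith [hη2]
    rw [this, hper]
  have key2 : ∀ y : ℝ, f (η * (y - η) / 2) = f (η * y / 2) := by
    intro y
    have h := key (y - η)
    simpa using h.symm
  simp only [L1, L1d, Mh, opComm, Pi.sub_apply]
  simp only [key, key2, show x + η - η = x by ring, show x - η + η = x by ring]
  push_cast
  ring
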